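/- Let G ⊆ ℝᵐ be open, and suppose: (a) for each j the jump map L_j : G → ℝᵐ is continuous and u ∈ G implies u + L_j(u) ∈ G; (b) for any (τ, z₀) ∈ ℝ × G the ODE z' = F(t,z) has a unique solution with maximal interval of existence (τ - a, τ + a) where a > δ for a fixed δ > 0 independent of (τ, z₀); (c) the impulse times satisfy 0 < t_j - t_{j-1} < δ for all j and |t_j| → ∞ as |j| → ∞. Then for any τ ∈ ℝ and u₀ ∈ G, the impulsive equation u' = F(t,u) for t ≠ t_j, Δu(t_j) = L_j(u(t_j)), with u(τ⁺) = u₀, has a solution defined on all of [τ, ∞). -/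

import Mathlib

/-!
Let `τ = s₀ < s₁ < s₂ < …` be `τ` followed by the impulse times after `τ`. Since consecutive
gaps are shorter than the guaranteed lifespan `δ`, the local solution started at `sₖ` from the
current value exists on all of `[sₖ, sₖ₊₁]`; its value at `sₖ₊₁`, after the jump, lies in `G`
again and is the initial value of the next piece. Because `sₖ → ∞`, gluing the pieces on the
intervals `(sₖ, sₖ₊₁]` gives a solution on `(τ, ∞)`.
-/

open Set Filter Topology

theorem exists_seq_of_forall_exists_step {α : Type*} {P : ℕ → α → Prop}
    {R : ℕ → α → α → Prop} {a₀ : α} (h₀ : P 0 a₀)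
    (hstep : ∀ k a, P k a → ∃ b, P (k + 1) b ∧ R k a b) :
    ∃ f : ℕ → α, f 0 = a₀ ∧ (∀ k, P k (f k)) ∧ ∀ k, R k (f k) (f (k + 1)) := by
  choose g hgP hgR using hstep
  let f : (k : ℕ) → {a // P k a} :=
    fun k => Nat.rec ⟨a₀, h₀⟩ (fun k a => ⟨g k a a.2, hgP k a a.2⟩) k
  exact ⟨fun k => (f k).1, rfl, fun k => (f k).2, fun k => hgR k (f k).1 (f k).2⟩

section Glue

variable {X : Type*} (s : ℕ → ℝ) (z : ℕ → ℝ → X)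

open Classical in
noncomputable def glueIoc (t : ℝ) : X :=
  if h : ∃ k, t ∈ Ioc (s k) (s (k + 1)) then z h.choose t else z 0 t

variable {s}

theorem glueIoc_eqOn (hs : Monotone s) (k : ℕ) :
    EqOn (glueIoc s z) (z k) (Ioc (s k) (s (k + 1))) := by
  intro t ht
  have h : ∃ k, t ∈ Ioc (s k) (s (k + 1)) := ⟨k, ht⟩
  rw [glueIoc, dif_pos h]
  congr
  by_contra hne
  exact disjoint_left.mp (hs.pairwise_disjoint_on_Ioc_succ hne) h.choose_spec ht

theorem exists_mem_Ioc_of_tendsto_atTop (hs : Tendsto s atTop atTop) {t : ℝ} (ht : s 0 < t) :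
    ∃ k, t ∈ Ioc (s k) (s (k + 1)) := by
  have hex : ∃ n, t ≤ s n := (hs.eventually_ge_atTop t).exists
  obtain ⟨k, hk⟩ : ∃ k, Nat.find hex = k + 1 :=
    Nat.exists_eq_succ_of_ne_zero fun h0 => (h0 ▸ Nat.find_spec hex).not_gt ht
  exact ⟨k, not_le.mp (Nat.find_min hex (hk ▸ k.lt_succ_self)), hk ▸ Nat.find_spec hex⟩

end Glue

section ImpulsiveODE

variable {E : Type*} [NormedAddCommGroup E] [NormedSpace ℝ E]

def IsSolutionOn (F : ℝ → E → E) (G : Set E) (z : ℝ → E) (I : Set ℝ) : Prop :=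
  ∀ t ∈ I, z t ∈ G ∧ HasDerivAt z (F t (z t)) t

theorem exists_impulsive_solution_of_nodes {F : ℝ → E → E} {G : Set E} {δ : ℝ}
    (hloc : ∀ σ, ∀ z₀ ∈ G, ∃ z : ℝ → E,
      z σ = z₀ ∧ IsSolutionOn F G z (Ioo (σ - δ) (σ + δ)))
    {s : ℕ → ℝ} (hs : ∀ k, s k < s (k + 1) ∧ s (k + 1) < s k + δ)
    (hs_top : Tendsto s atTop atTop) {Φ : ℕ → E → E} (hΦ : ∀ k, MapsTo (Φ k) G G)
    {u₀ : E} (hu₀ : u₀ ∈ G) :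
    ∃ u : ℝ → E, Tendsto u (𝓝[>] s 0) (𝓝 u₀) ∧
      (∀ t, s 0 < t → u t ∈ G) ∧
      (∀ t, s 0 < t → (∀ k, t ≠ s (k + 1)) → HasDerivAt u (F t (u t)) t) ∧
      (∀ k, ContinuousWithinAt u (Iic (s (k + 1))) (s (k + 1))) ∧
      ∀ k, Tendsto u (𝓝[>] s (k + 1)) (𝓝 (Φ k (u (s (k + 1))))) := by
  have hmono : Monotone s := monotone_nat_of_le_succ fun k => (hs k).1.le
  have hwindow : ∀ k, Icc (s k) (s (k + 1)) ⊆ Ioo (s k - δ) (s k + δ) := fun k t ht =>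
    ⟨by linarith [ht.1, hs k], by linarith [ht.2, hs k]⟩
  obtain ⟨z₀, hz₀, hsol₀⟩ := hloc (s 0) u₀ hu₀
  have hnext : ∀ k (z : ℝ → E), IsSolutionOn F G z (Ioo (s k - δ) (s k + δ)) →
      ∃ z', IsSolutionOn F G z' (Ioo (s (k + 1) - δ) (s (k + 1) + δ)) ∧
        z' (s (k + 1)) = Φ k (z (s (k + 1))) := fun k z hz => by
    have hzG : z (s (k + 1)) ∈ G := (hz _ (hwindow k (right_mem_Icc.2 (hs k).1.le))).1
    obtain ⟨z', hz'₀, hz'⟩ := hloc (s (k + 1)) _ (hΦ k hzG)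
    exact ⟨z', hz', hz'₀⟩
  obtain ⟨z, rfl, hsol, hjump⟩ := exists_seq_of_forall_exists_step hsol₀ hnext
  have hderiv : ∀ k, ∀ t ∈ Icc (s k) (s (k + 1)), HasDerivAt (z k) (F t (z k t)) t :=
    fun k t ht => (hsol k t (hwindow k ht)).2
  set u := glueIoc s z
  have hu : ∀ k, EqOn u (z k) (Ioc (s k) (s (k + 1))) := glueIoc_eqOn z hmono
  have hright : ∀ k, Tendsto u (𝓝[>] s k) (𝓝 (z k (s k))) := fun k =>
    ((hderiv k _ (left_mem_Icc.2 (hs k).1.le)).continuousAt.continuousWithinAt.tendsto).congr'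
      (mem_of_superset (Ioc_mem_nhdsGT (hs k).1) fun t ht => (hu k ht).symm)
  refine ⟨u, hz₀ ▸ hright 0, fun t ht => ?_, fun t ht hne => ?_, fun k => ?_, fun k => ?_⟩
  · obtain ⟨k, hk⟩ := exists_mem_Ioc_of_tendsto_atTop hs_top ht
    rw [hu k hk]
    exact (hsol k t (hwindow k (Ioc_subset_Icc_self hk))).1
  · obtain ⟨k, hk⟩ := exists_mem_Ioc_of_tendsto_atTop hs_top ht
    have hnhds : Ioo (s k) (s (k + 1)) ∈ 𝓝 t :=
      isOpen_Ioo.mem_nhds ⟨hk.1, lt_of_le_of_ne hk.2 (hne k)⟩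
    rw [hu k hk]
    exact (hderiv k t (Ioc_subset_Icc_self hk)).congr_of_eventuallyEq
      (mem_of_superset hnhds fun x hx => hu k (Ioo_subset_Ioc_self hx))
  · have hk : s (k + 1) ∈ Ioc (s k) (s (k + 1)) := right_mem_Ioc.2 (hs k).1
    exact (hderiv k _ (Ioc_subset_Icc_self hk)).continuousAt.continuousWithinAt
      |>.congr_of_eventuallyEq
        (mem_of_superset (Ioc_mem_nhdsLE (hs k).1) fun t ht => hu k ht) (hu k hk)
  · rw [hu k (right_mem_Ioc.2 (hs k).1), ← hjump k]
    exact hright (k + 1)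

end ImpulsiveODE

theorem exists_first_index_gt {α : Type*} [LinearOrder α] [NoMaxOrder α] {f : ℤ → α}
    (htop : Tendsto f atTop atTop) (hbot : Tendsto f atBot atBot) (a : α) :
    ∃ j₀, a < f j₀ ∧ f (j₀ - 1) ≤ a ∧ ∀ j, a < f j → j₀ ≤ j := by
  obtain ⟨B, hB⟩ := mem_atBot_sets.mp (hbot.eventually (eventually_le_atBot a))
  obtain ⟨j₀, hj₀, hmin⟩ := Int.exists_least_of_bdd (P := fun j => a < f j)
    ⟨B + 1, fun j hj => by_contra fun hlt => (hB j (by omega)).not_gt hj⟩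
    (htop.eventually (eventually_gt_atTop a)).exists
  exact ⟨j₀, hj₀, le_of_not_gt fun h => by linarith [hmin _ h], hmin⟩

def impulseNodes (τ : ℝ) (tj : ℤ → ℝ) (j₀ : ℤ) : ℕ → ℝ
  | 0 => τ
  | k + 1 => tj (j₀ + k)

theorem impulseNodes_step {tj : ℤ → ℝ} {δ τ : ℝ} {j₀ : ℤ}
    (hgap : ∀ j : ℤ, 0 < tj j - tj (j - 1) ∧ tj j - tj (j - 1) < δ)
    (hτ : tj (j₀ - 1) ≤ τ) (hτ' : τ < tj j₀) (k : ℕ) :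
    impulseNodes τ tj j₀ k < impulseNodes τ tj j₀ (k + 1) ∧
      impulseNodes τ tj j₀ (k + 1) < impulseNodes τ tj j₀ k + δ := by
  cases k with
  | zero =>
    simp only [impulseNodes, Nat.cast_zero, add_zero]
    exact ⟨hτ', by linarith [(hgap j₀).2]⟩
  | succ k =>
    have h := hgap (j₀ + k + 1)
    rw [add_sub_cancel_right] at h
    simp only [impulseNodes, Nat.cast_succ, ← add_assoc]
    constructor <;> linarith [h.1, h.2]

theorem tendsto_impulseNodes {tj : ℤ → ℝ} (htop : Tendsto tj atTop atTop) (τ : ℝ) (j₀ : ℤ) :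
    Tendsto (impulseNodes τ tj j₀) atTop atTop :=
  (tendsto_add_atTop_iff_nat 1).mp <|
    htop.comp (tendsto_atTop_add_const_left _ j₀ tendsto_natCast_atTop_atTop)

theorem stmt_8_general (m : ℕ) (G : Set (Fin m → ℝ))
    (F : ℝ → (Fin m → ℝ) → (Fin m → ℝ))
    (tj : ℤ → ℝ) (L : ℤ → (Fin m → ℝ) → (Fin m → ℝ))
    (hLG : ∀ j : ℤ, ∀ u ∈ G, u + L j u ∈ G)
    (δ : ℝ)
    (hgap : ∀ j : ℤ, 0 < tj j - tj (j - 1) ∧ tj j - tj (j - 1) < δ)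
    (htop : Tendsto tj atTop atTop) (hbot : Tendsto tj atBot atBot)
    (hloc : ∀ (σ : ℝ), ∀ z₀ ∈ G, ∃ z : ℝ → (Fin m → ℝ), z σ = z₀ ∧
        ∀ t ∈ Set.Ioo (σ - δ) (σ + δ), z t ∈ G ∧ HasDerivAt z (F t (z t)) t) :
    ∀ (τ : ℝ), ∀ u₀ ∈ G, ∃ u : ℝ → (Fin m → ℝ),
      Tendsto u (nhdsWithin τ (Set.Ioi τ)) (nhds u₀) ∧
      (∀ t : ℝ, τ < t → u t ∈ G) ∧
      (∀ t : ℝ, τ < t → (∀ j : ℤ, t ≠ tj j) → HasDerivAt u (F t (u t)) t) ∧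
      (∀ j : ℤ, τ < tj j → ContinuousWithinAt u (Set.Iic (tj j)) (tj j)) ∧
      (∀ j : ℤ, τ < tj j →
        Tendsto u (nhdsWithin (tj j) (Set.Ioi (tj j))) (nhds (u (tj j) + L j (u (tj j))))) := by
  intro τ u₀ hu₀
  obtain ⟨j₀, hτj₀, hj₀τ, hj₀_min⟩ := exists_first_index_gt htop hbot τ
  obtain ⟨u, hinit, hmem, hderiv, hleft, hjump⟩ := exists_impulsive_solution_of_nodes hloc
    (impulseNodes_step hgap hj₀τ hτj₀) (tendsto_impulseNodes htop τ j₀)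
    (Φ := fun k u => u + L (j₀ + k) u) (fun k => hLG (j₀ + k)) hu₀
  have hindex : ∀ j, τ < tj j → ∃ k : ℕ, j = j₀ + k := fun j hj =>
    (Int.le.dest (hj₀_min j hj)).imp fun _ hk => hk.symm
  refine ⟨u, hinit, hmem, fun t ht hne => hderiv t ht fun k => hne _, fun j hj => ?_,
    fun j hj => ?_⟩
  · obtain ⟨k, rfl⟩ := hindex j hj
    exact hleft k
  · obtain ⟨k, rfl⟩ := hindex j hj
    exact hjump k

/-- Global forward existence for impulsive equations: under continuity of F,
local Lipschitz-type existence/uniqueness with guaranteed lifespan exceeding δ,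
jump maps sending G into G, and impulse gaps smaller than δ with |t_j| → ∞,
every initial value problem u' = F(t,u) (t ≠ t_j), Δu(t_j) = L_j(u(t_j)),
u(τ⁺) = u₀ has a solution defined on all of [τ, ∞). -/
theorem stmt_8 (m : ℕ) (G : Set (Fin m → ℝ)) (hG : IsOpen G)
    (F : ℝ → (Fin m → ℝ) → (Fin m → ℝ))
    (hFcont : Continuous fun p : ℝ × (Fin m → ℝ) => F p.1 p.2)
    (tj : ℤ → ℝ) (L : ℤ → (Fin m → ℝ) → (Fin m → ℝ))
    (hLcont : ∀ j : ℤ, ContinuousOn (L j) G)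
    (hLG : ∀ j : ℤ, ∀ u ∈ G, u + L j u ∈ G)
    (δ : ℝ) (hδ : 0 < δ)
    (hgap : ∀ j : ℤ, 0 < tj j - tj (j - 1) ∧ tj j - tj (j - 1) < δ)
    (htop : Tendsto tj atTop atTop) (hbot : Tendsto tj atBot atBot)
    (hloc : ∀ (σ : ℝ), ∀ z₀ ∈ G, ∃ z : ℝ → (Fin m → ℝ), z σ = z₀ ∧
        ∀ t ∈ Set.Ioo (σ - δ) (σ + δ), z t ∈ G ∧ HasDerivAt z (F t (z t)) t)
    (huniq : ∀ (σ : ℝ) (a b : ℝ) (z₁ z₂ : ℝ → (Fin m → ℝ)), σ ∈ Set.Ioo a b →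
        z₁ σ = z₂ σ →
        (∀ t ∈ Set.Ioo a b, z₁ t ∈ G ∧ HasDerivAt z₁ (F t (z₁ t)) t) →
        (∀ t ∈ Set.Ioo a b, z₂ t ∈ G ∧ HasDerivAt z₂ (F t (z₂ t)) t) →
        Set.EqOn z₁ z₂ (Set.Ioo a b)) :
    ∀ (τ : ℝ), ∀ u₀ ∈ G, ∃ u : ℝ → (Fin m → ℝ),
      Tendsto u (nhdsWithin τ (Set.Ioi τ)) (nhds u₀) ∧
      (∀ t : ℝ, τ < t → u t ∈ G) ∧
      (∀ t : ℝ, τ < t → (∀ j : ℤ, t ≠ tj j) → HasDerivAt u (F t (u t)) t) ∧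
      (∀ j : ℤ, τ < tj j → ContinuousWithinAt u (Set.Iic (tj j)) (tj j)) ∧
      (∀ j : ℤ, τ < tj j →
        Tendsto u (nhdsWithin (tj j) (Set.Ioi (tj j))) (nhds (u (tj j) + L j (u (tj j))))) :=
  stmt_8_general m G F tj L hLG δ hgap htop hbot hloc
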